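/- (Pointwise integrand identity underlying the base-q² versus base-q quadratic transformation.) Let n ≥ 1 and m ≥ 1 odd, let p, q ∈ ℂ with 0 < |p| < 1, 0 < |q| < 1, let Q ∈ ℂ with Q² = q, and let u_0, …, u_{m+2} be arbitrary nonzero complex numbers (no balancing condition is needed). Let z_1, …, z_n be nonzero complex numbers such that for all integers a, b ≥ 0: p^a q^b z_i^{2} ≠ 1 and p^a q^b z_i^{−2} ≠ 1 for all i; p^a q^b (z_i z_j)^{±1} ≠ 1 and p^a q^b (z_i/z_j)^{±1} ≠ 1 for all i < j; p^a q^b u_r z_i^{±1} ≠ 1 for all r, i; and p^a q^b Q z_i^{±1} ≠ 1 and p^a q^b Q z_i^{±1} ≠ −1 for all i. Then the two elliptic Selberg densities are equal at (z_1, …, z_n): Δ^{(n)}(z; u_0, q u_0, u_1, q u_1, …, u_{m+2}, q u_{m+2}; q²; p, q²) = Δ^{(n)}(z; u_0, u_1, …, u_{m+2}, Q, −Q; q; p, q). -/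

import Mathlib

open Complex

/-- The elliptic Gamma function `Γ_{a,b}(z) = ∏_{i,j ≥ 0} (1 - a^{i+1} b^{j+1}/z)/(1 - a^i b^j z)`. -/
noncomputable def ellGamma (a b z : ℂ) : ℂ :=
  ∏' ij : ℕ × ℕ, (1 - a ^ (ij.1 + 1) * b ^ (ij.2 + 1) / z) / (1 - a ^ ij.1 * b ^ ij.2 * z)

/-- The infinite Pochhammer symbol `(x; r)_∞ = ∏_{k ≥ 0} (1 - r^k x)`. -/
noncomputable def qPoch (x r : ℂ) : ℂ :=
  ∏' k : ℕ, (1 - r ^ k * x)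

/-- The elliptic Selberg density in `n` variables, with parameter list `u`
(of length `2m+6` for order `m`), base parameter `t`, and elliptic Gamma bases `(a, b)`. -/
noncomputable def selbergDensity (n : ℕ) (u : List ℂ) (t a b : ℂ) (z : Fin n → ℂ) : ℂ :=
  ((qPoch a a * qPoch b b * ellGamma a b t / 2) ^ n / (n.factorial : ℂ)) *
  (∏ i : Fin n, ∏ j : Fin n,
    if i < j then
      (ellGamma a b (t * z i * z j) * ellGamma a b (t * z i / z j) *
        ellGamma a b (t * z j / z i) * ellGamma a b (t / (z i * z j))) /
      (ellGamma a b (z i * z j) * ellGamma a b (z i / z j) *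
        ellGamma a b (z j / z i) * ellGamma a b (1 / (z i * z j)))
    else 1) *
  ∏ i : Fin n,
    (u.map (fun ur => ellGamma a b (ur * z i) * ellGamma a b (ur / z i))).prod /
      (ellGamma a b (z i ^ 2) * ellGamma a b ((z i ^ 2)⁻¹))

open Filter Topology

lemma summable_ratio_sub_one {ι : Type*} (al be : ℂ) (c : ι → ℂ) (hc : Summable c) :
    Summable fun i => (1 - al * c i) / (1 - be * c i) - 1 := by
  refine Summable.of_norm_bounded_eventually (g := fun i => 2 * ‖be - al‖ * ‖c i‖)
    ((hc.norm.mul_left _)) ?_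
  have hev : ∀ᶠ i in cofinite, ‖be * c i‖ < 1/2 := by
    have h := (hc.mul_left be).tendsto_cofinite_zero
    have := h.eventually (Metric.ball_mem_nhds (0:ℂ) (by norm_num : (0:ℝ) < 1/2))
    simpa [Metric.mem_ball, dist_eq_norm] using this
  filter_upwards [hev] with i hi
  have hne : (1 : ℂ) - be * c i ≠ 0 := by
    intro h
    have : be * c i = 1 := by linear_combination -h
    rw [this] at hi; norm_num at hi
  have hlow : (1:ℝ)/2 ≤ ‖(1:ℂ) - be * c i‖ := by
    have h1 := norm_sub_norm_le (1:ℂ) (be * c i)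
    simp only [norm_one] at h1
    linarith
  have heq : (1 - al * c i) / (1 - be * c i) - 1 = ((be - al) * c i) / (1 - be * c i) := by
    rw [div_sub_one hne]; ring_nf
  rw [heq, norm_div, norm_mul]
  rw [div_le_iff₀ (by linarith : (0:ℝ) < ‖(1:ℂ) - be * c i‖)]
  have h2 : 0 ≤ ‖be - al‖ * ‖c i‖ := by positivity
  nlinarith [norm_nonneg (be - al), norm_nonneg (c i)]

lemma summable_log_of_summable_sub_one {ι : Type*} {f : ι → ℂ} (h0 : ∀ i, f i ≠ 0)
    (hf : Summable fun i => f i - 1) : Summable fun i => Complex.log (f i) := by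
  refine Summable.of_norm_bounded_eventually (g := fun i => 3/2 * ‖f i - 1‖)
    (hf.norm.mul_left _) ?_
  have hev : ∀ᶠ i in cofinite, ‖f i - 1‖ ≤ 1/2 := by
    have h := hf.tendsto_cofinite_zero
    have := h.eventually (Metric.closedBall_mem_nhds (0:ℂ) (by norm_num : (0:ℝ) < 1/2))
    simpa [Metric.mem_closedBall, dist_eq_norm] using this
  filter_upwards [hev] with i hi
  calc ‖Complex.log (f i)‖ = ‖Complex.log (1 + (f i - 1))‖ := by ring_nf
    _ ≤ 3/2 * ‖f i - 1‖ := Complex.norm_log_one_add_half_le_self hi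

lemma hasProd_zero_of_zero {ι : Type*} {f : ι → ℂ} (i0 : ι) (h : f i0 = 0) : HasProd f 0 := by
  have hev : ∀ᶠ s in (atTop : Filter (Finset ι)), ∏ i ∈ s, f i = 0 := by
    filter_upwards [Filter.eventually_ge_atTop ({i0} : Finset ι)] with s hs
    exact Finset.prod_eq_zero (hs (Finset.mem_singleton_self i0)) h
  exact Filter.Tendsto.congr' (by filter_upwards [hev] with s hs using hs.symm) tendsto_const_nhds

lemma multipliable_of_summable_sub_one {ι : Type*} {f : ι → ℂ}
    (hf : Summable fun i => f i - 1) : Multipliable f := by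
  by_cases h0 : ∀ i, f i ≠ 0
  · exact Complex.multipliable_of_summable_log (summable_log_of_summable_sub_one h0 hf)
  · push_neg at h0
    obtain ⟨i0, hi0⟩ := h0
    exact ⟨0, hasProd_zero_of_zero i0 hi0⟩

lemma tprod_ne_zero {ι : Type*} {f : ι → ℂ} (h0 : ∀ i, f i ≠ 0)
    (hf : Summable fun i => f i - 1) : ∏' i, f i ≠ 0 := by
  rw [← Complex.cexp_tsum_eq_tprod h0 (summable_log_of_summable_sub_one h0 hf)]
  exact Complex.exp_ne_zero _

/-- The general factor of the elliptic Gamma function. -/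
noncomputable def gfac (a b z : ℂ) (ij : ℕ × ℕ) : ℂ :=
  (1 - a ^ (ij.1 + 1) * b ^ (ij.2 + 1) / z) / (1 - a ^ ij.1 * b ^ ij.2 * z)

lemma ellGamma_eq_tprod (a b z : ℂ) : ellGamma a b z = ∏' ij, gfac a b z ij := rfl

lemma summable_geom_norm {a : ℂ} (ha : ‖a‖ < 1) :
    Summable fun i : ℕ => ‖a ^ i‖ := by
  simp only [norm_pow]
  exact summable_geometric_of_lt_one (norm_nonneg a) (by simpa using ha)

lemma summable_geom2 {a b : ℂ} (ha : ‖a‖ < 1) (hb : ‖b‖ < 1) :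
    Summable fun ij : ℕ × ℕ => a ^ ij.1 * b ^ ij.2 :=
  summable_mul_of_summable_norm (summable_geom_norm ha) (summable_geom_norm hb)

lemma summable_shape2 {a b : ℂ} (al be : ℂ) (ha : ‖a‖ < 1) (hb : ‖b‖ < 1)
    (F : ℕ × ℕ → ℂ)
    (hF : ∀ i j : ℕ, F (i, j) = (1 - al * (a ^ i * b ^ j)) / (1 - be * (a ^ i * b ^ j))) :
    Summable fun ij => F ij - 1 :=
  (summable_ratio_sub_one al be _ (summable_geom2 ha hb)).congr
    (fun ij => by rw [hF ij.1 ij.2])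

lemma gfac_summable {a b : ℂ} (z : ℂ) (ha : ‖a‖ < 1) (hb : ‖b‖ < 1) :
    Summable fun ij => gfac a b z ij - 1 := by
  refine summable_shape2 (a * b / z) z ha hb _ (fun i j => ?_)
  unfold gfac
  congr 1 <;> ring

lemma gfac_multipliable {a b : ℂ} (z : ℂ) (ha : ‖a‖ < 1) (hb : ‖b‖ < 1) :
    Multipliable (gfac a b z) :=
  multipliable_of_summable_sub_one (gfac_summable z ha hb)

lemma one_sub_ne_zero_of_abs_lt {w : ℂ} (h : ‖w‖ < 1) : (1 : ℂ) - w ≠ 0 := by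
  intro h0
  have : w = 1 := by linear_combination -h0
  rw [this] at h; simp at h

lemma abs_pow_mul_pow_lt_one {a b : ℂ} (ha : ‖a‖ < 1) (hb : ‖b‖ < 1)
    {i j : ℕ} (h : i ≠ 0 ∨ j ≠ 0) : ‖a ^ i * b ^ j‖ < 1 := by
  rw [norm_mul, norm_pow, norm_pow]
  rcases h with h | h
  · have h1 : ‖a‖ ^ i < 1 := pow_lt_one₀ (norm_nonneg a) ha h
    have h2 : ‖b‖ ^ j ≤ 1 := pow_le_one₀ (norm_nonneg b) hb.le
    nlinarith [pow_nonneg (norm_nonneg a) i, pow_nonneg (norm_nonneg b) j]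
  · have h1 : ‖a‖ ^ i ≤ 1 := pow_le_one₀ (norm_nonneg a) ha.le
    have h2 : ‖b‖ ^ j < 1 := pow_lt_one₀ (norm_nonneg b) hb h
    nlinarith [pow_nonneg (norm_nonneg a) i, pow_nonneg (norm_nonneg b) j]

/-- Nonvanishing of the elliptic Gamma function given nonvanishing of all factors. -/
lemma ellGamma_ne_zero {a b : ℂ} (z : ℂ) (ha : ‖a‖ < 1) (hb : ‖b‖ < 1)
    (hnum : ∀ i j : ℕ, (1 : ℂ) - a ^ (i + 1) * b ^ (j + 1) / z ≠ 0)
    (hden : ∀ i j : ℕ, (1 : ℂ) - a ^ i * b ^ j * z ≠ 0) :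
    ellGamma a b z ≠ 0 := by
  rw [ellGamma_eq_tprod]
  exact tprod_ne_zero (fun ij => div_ne_zero (hnum ij.1 ij.2) (hden ij.1 ij.2))
    (gfac_summable z ha hb)

/-- Symmetry of the elliptic Gamma function in the two bases. -/
lemma ellGamma_symm (a b z : ℂ) : ellGamma a b z = ellGamma b a z := by
  rw [ellGamma_eq_tprod, ellGamma_eq_tprod]
  rw [← (Equiv.prodComm ℕ ℕ).tprod_eq (gfac a b z)]
  exact tprod_congr fun c => by
    simp only [Equiv.prodComm_apply, Prod.fst_swap, Prod.snd_swap, gfac]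
    congr 1 <;> ring

/-- The reindexing equivalence for the base-splitting identity. -/
def e2 : (ℕ × ℕ) × Fin 2 ≃ ℕ × ℕ where
  toFun x := (x.1.1, 2 * x.1.2 + x.2.val)
  invFun p := ((p.1, p.2 / 2), ⟨p.2 % 2, Nat.mod_lt _ two_pos⟩)
  left_inv := by
    rintro ⟨⟨i, j⟩, k⟩
    fin_cases k <;> simp [Prod.ext_iff, Fin.ext_iff] <;> omega
  right_inv := by
    rintro ⟨i, j⟩
    simp [Prod.ext_iff, Fin.ext_iff]
    omega

/-- Splitting of the elliptic Gamma function along the second base. -/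
lemma ellGamma_split {a b : ℂ} (z : ℂ) (ha : ‖a‖ < 1) (hb : ‖b‖ < 1)
    (hb0 : b ≠ 0) (hz : z ≠ 0) :
    ellGamma a b z = ellGamma a (b ^ 2) z * ellGamma a (b ^ 2) (b * z) := by
  have hb2 : ‖b ^ 2‖ < 1 := by
    rw [norm_pow]
    exact pow_lt_one₀ (norm_nonneg b) hb (by norm_num)
  have m1 : Multipliable (gfac a (b ^ 2) z) := gfac_multipliable z ha hb2
  have m2 : Multipliable (gfac a (b ^ 2) (b * z)) := gfac_multipliable (b * z) ha hb2
  rw [ellGamma_eq_tprod, ellGamma_eq_tprod, ellGamma_eq_tprod]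
  rw [← Multipliable.tprod_mul m1 m2]
  have key : ∀ ij : ℕ × ℕ, gfac a (b ^ 2) z ij * gfac a (b ^ 2) (b * z) ij =
      gfac a b z (e2 (ij, 0)) * gfac a b z (e2 (ij, 1)) := by
    rintro ⟨i, j⟩
    simp only [gfac, e2, Equiv.coe_fn_mk, Fin.val_zero, Fin.val_one, pow_zero, pow_one]
    rw [div_mul_div_comm, div_mul_div_comm]
    congr 1
    · field_simp
      ring
    · ring
  rw [tprod_congr key]
  have h2 : ∀ ij : ℕ × ℕ, gfac a b z (e2 (ij, 0)) * gfac a b z (e2 (ij, 1)) =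
      ∏' k : Fin 2, gfac a b z (e2 (ij, k)) := by
    intro ij
    rw [tprod_fintype, Fin.prod_univ_two]
  rw [tprod_congr h2]
  have h3 : ∏' x : (ℕ × ℕ) × Fin 2, gfac a b z (e2 x) =
      ∏' (ij : ℕ × ℕ) (k : Fin 2), gfac a b z (e2 (ij, k)) :=
    Multipliable.tprod_prod' ((e2.multipliable_iff).mpr (gfac_multipliable z ha hb))
      (fun ij => Multipliable.of_finite)
  exact ((e2.tprod_eq (gfac a b z)).symm.trans h3)

/-- Doubling identity. -/
lemma ellGamma_double {a b : ℂ} (w : ℂ) (ha : ‖a‖ < 1) (hb : ‖b‖ < 1) :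
    ellGamma a b w * ellGamma a b (-w) = ellGamma (a ^ 2) (b ^ 2) (w ^ 2) := by
  rw [ellGamma_eq_tprod, ellGamma_eq_tprod, ellGamma_eq_tprod]
  rw [← Multipliable.tprod_mul (gfac_multipliable w ha hb) (gfac_multipliable (-w) ha hb)]
  refine tprod_congr fun ij => ?_
  rcases ij with ⟨i, j⟩
  simp only [gfac]
  rw [div_mul_div_comm]
  congr 1
  · simp only [sq, mul_pow]
    ring
  · simp only [sq, mul_pow]
    ring

/-- Reflection identity. -/
lemma ellGamma_reflect {a b : ℂ} (w : ℂ) (ha : ‖a‖ < 1) (hb : ‖b‖ < 1)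
    (ha0 : a ≠ 0) (hb0 : b ≠ 0)
    (hnum : ∀ i j : ℕ, (1 : ℂ) - a ^ (i + 1) * b ^ (j + 1) / w ≠ 0)
    (hden : ∀ i j : ℕ, (1 : ℂ) - a ^ i * b ^ j * w ≠ 0) :
    ellGamma a b w * ellGamma a b (a * b / w) = 1 := by
  rw [ellGamma_eq_tprod, ellGamma_eq_tprod]
  rw [← Multipliable.tprod_mul (gfac_multipliable w ha hb) (gfac_multipliable (a * b / w) ha hb)]
  rw [show (1 : ℂ) = ∏' _ : ℕ × ℕ, (1 : ℂ) from tprod_one.symm]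
  refine tprod_congr fun ij => ?_
  rcases ij with ⟨i, j⟩
  have key : gfac a b (a * b / w) (i, j) =
      (1 - a ^ i * b ^ j * w) / (1 - a ^ (i + 1) * b ^ (j + 1) / w) := by
    simp only [gfac]
    congr 1
    · field_simp
      ring
    · field_simp
      ring
  rw [key]
  simp only [gfac]
  rw [div_mul_div_comm, mul_comm (1 - a ^ (i + 1) * b ^ (j + 1) / w)]
  exact div_self (mul_ne_zero (hden i j) (hnum i j))

lemma prod_range_ratio_up (f : ℕ → ℂ) (h0 : ∀ n, f n ≠ 0) (n : ℕ) :
    ∏ i ∈ Finset.range n, f (i + 1) / f i = f n / f 0 := by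
  induction n with
  | zero => simp [div_self (h0 0)]
  | succ n ih =>
    rw [Finset.prod_range_succ, ih, div_mul_div_cancel₀' (h0 n)]

lemma prod_range_ratio_down (f : ℕ → ℂ) (h0 : ∀ n, f n ≠ 0) (n : ℕ) :
    ∏ i ∈ Finset.range n, f i / f (i + 1) = f 0 / f n := by
  induction n with
  | zero => simp [div_self (h0 0)]
  | succ n ih =>
    rw [Finset.prod_range_succ, ih, div_mul_div_cancel₀ (h0 n)]

lemma tprod_ratio_up (f : ℕ → ℂ) (h0 : ∀ n, f n ≠ 0) (hlim : Tendsto f atTop (𝓝 1))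
    (hm : Multipliable fun n => f (n + 1) / f n) : ∏' n, f (n + 1) / f n = (f 0)⁻¹ := by
  have h1 := (hm.hasProd_iff_tendsto_nat).mp hm.hasProd
  have h2 : Tendsto (fun n : ℕ => ∏ i ∈ Finset.range n, f (i + 1) / f i) atTop
      (𝓝 ((f 0)⁻¹)) := by
    have h3 : Tendsto (fun n : ℕ => f n / f 0) atTop (𝓝 (1 / f 0)) :=
      hlim.div_const (f 0)
    rw [one_div] at h3
    exact h3.congr (fun n => (prod_range_ratio_up f h0 n).symm)
  exact tendsto_nhds_unique h1 h2

lemma tprod_ratio_down (f : ℕ → ℂ) (h0 : ∀ n, f n ≠ 0) (hlim : Tendsto f atTop (𝓝 1))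
    (hm : Multipliable fun n => f n / f (n + 1)) : ∏' n, f n / f (n + 1) = f 0 := by
  have h1 := (hm.hasProd_iff_tendsto_nat).mp hm.hasProd
  have h2 : Tendsto (fun n : ℕ => ∏ i ∈ Finset.range n, f i / f (i + 1)) atTop (𝓝 (f 0)) := by
    have h3 : Tendsto (fun n : ℕ => f 0 / f n) atTop (𝓝 (f 0 / 1)) :=
      (tendsto_const_nhds).div hlim one_ne_zero
    rw [div_one] at h3
    exact h3.congr (fun n => (prod_range_ratio_down f h0 n).symm)
  exact tendsto_nhds_unique h1 h2

lemma tendsto_one_sub_pow {b : ℂ} (hb : ‖b‖ < 1) (c : ℂ) :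
    Tendsto (fun j : ℕ => 1 - c * b ^ j) atTop (𝓝 1) := by
  have h := tendsto_pow_atTop_nhds_zero_of_norm_lt_one (x := b) (by simpa using hb)
  have h2 : Tendsto (fun j : ℕ => 1 - c * b ^ j) atTop (𝓝 (1 - c * 0)) :=
    tendsto_const_nhds.sub ((h.const_mul c))
  simpa using h2

/-- `(b;b)_∞ Γ_{a,b}(b) = (a;a)_∞`. -/
lemma qPoch_mul_ellGamma {a b : ℂ} (ha : ‖a‖ < 1) (hb : ‖b‖ < 1)
    (hb0 : b ≠ 0) : qPoch b b * ellGamma a b b = qPoch a a := by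
  set X : ℕ × ℕ → ℂ := fun ij => (1 - a ^ (ij.1 + 1) * b ^ ij.2) / (1 - a ^ (ij.1 + 1) * b ^ (ij.2 + 1)) with hX
  set Y : ℕ × ℕ → ℂ := fun ij => (1 - a ^ (ij.1 + 1) * b ^ (ij.2 + 1)) / (1 - a ^ ij.1 * b ^ (ij.2 + 1)) with hY
  have sX : Summable fun ij => X ij - 1 :=
    summable_shape2 a (a * b) ha hb X (fun i j => by simp only [hX]; congr 1 <;> ring)
  have sY : Summable fun ij => Y ij - 1 :=
    summable_shape2 (a * b) b ha hb Y (fun i j => by simp only [hY]; congr 1 <;> ring)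
  have mX : Multipliable X := multipliable_of_summable_sub_one sX
  have mY : Multipliable Y := multipliable_of_summable_sub_one sY
  -- gfac a b b = X * Y pointwise
  have hXY : ∀ ij : ℕ × ℕ, gfac a b b ij = X ij * Y ij := by
    rintro ⟨i, j⟩
    have hD1 : (1 : ℂ) - a ^ (i + 1) * b ^ (j + 1) ≠ 0 :=
      one_sub_ne_zero_of_abs_lt (abs_pow_mul_pow_lt_one ha hb (Or.inl (Nat.succ_ne_zero i)))
    simp only [hX, hY, gfac]
    rw [div_mul_div_cancel₀ hD1]
    congr 1
    · field_simp
      ring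
    · ring
  -- the X part telescopes to (a;a)∞
  have hXval : ∏' ij, X ij = qPoch a a := by
    have slice : ∀ i : ℕ, Multipliable fun j => X (i, j) := by
      intro i
      refine multipliable_of_summable_sub_one ((summable_ratio_sub_one (a ^ (i + 1))
        (a ^ (i + 1) * b) (fun j => b ^ j) (Summable.of_norm (summable_geom_norm hb))).congr
        (fun j => ?_))
      simp only [hX]
      rw [sub_left_inj]
      congr 1 <;> ring
    rw [Multipliable.tprod_prod' mX slice]
    have inner : ∀ i : ℕ, ∏' j, X (i, j) = 1 - a ^ (i + 1) * b ^ 0 := by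
      intro i
      have := tprod_ratio_down (fun j => 1 - a ^ (i + 1) * b ^ j)
        (fun j => one_sub_ne_zero_of_abs_lt (abs_pow_mul_pow_lt_one ha hb (Or.inl (Nat.succ_ne_zero i))))
        (tendsto_one_sub_pow hb _) (slice i)
      exact this
    rw [tprod_congr inner]
    unfold qPoch
    exact tprod_congr (fun i => by rw [pow_zero, mul_one, pow_succ, mul_comm (a ^ i) a])
  -- the Y part telescopes to ∏ (1-b^{j+1})⁻¹
  have hYval : ∏' ij, Y ij = ∏' j : ℕ, ((1:ℂ) - b ^ (j + 1))⁻¹ := by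
    have hswap : ∏' ij, Y ij = ∏' c : ℕ × ℕ, Y (c.2, c.1) := by
      exact ((Equiv.prodComm ℕ ℕ).tprod_eq Y).symm
    rw [hswap]
    have mW : Multipliable fun c : ℕ × ℕ => Y (c.2, c.1) :=
      multipliable_of_summable_sub_one (summable_shape2 (a * b) b hb ha _
        (fun j i => by simp only [hY]; congr 1 <;> ring))
    have slice : ∀ j : ℕ, Multipliable fun i => Y (i, j) := by
      intro j
      refine multipliable_of_summable_sub_one ((summable_ratio_sub_one (a * b ^ (j + 1))
        (b ^ (j + 1)) (fun i => a ^ i) (Summable.of_norm (summable_geom_norm ha))).congr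
        (fun i => ?_))
      simp only [hY]
      rw [sub_left_inj]
      congr 1 <;> ring
    rw [Multipliable.tprod_prod' mW (fun j => slice j)]
    refine tprod_congr (fun j => ?_)
    have h0 : ∀ i : ℕ, (1 : ℂ) - a ^ i * b ^ (j + 1) ≠ 0 := fun i =>
      one_sub_ne_zero_of_abs_lt (abs_pow_mul_pow_lt_one ha hb (Or.inr (Nat.succ_ne_zero j)))
    have hlim : Tendsto (fun i : ℕ => 1 - a ^ i * b ^ (j + 1)) atTop (𝓝 1) :=
      (tendsto_one_sub_pow ha (b ^ (j + 1))).congr (fun i => by ring_nf)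
    have h1 := tprod_ratio_up (fun i => 1 - a ^ i * b ^ (j + 1)) h0 hlim (slice j)
    refine Eq.trans ?_ (h1.trans (by norm_num))
    rfl
  -- 1D Pochhammer facts
  have geomb : Summable fun k : ℕ => b ^ k := Summable.of_norm (summable_geom_norm hb)
  have mPoch : Multipliable fun k : ℕ => (1 : ℂ) - b ^ k * b :=
    multipliable_of_summable_sub_one ((summable_ratio_sub_one b 0 (fun k => b ^ k) geomb).congr
      (fun k => by rw [zero_mul, sub_zero, div_one, mul_comm]))
  have mInv : Multipliable fun k : ℕ => ((1 : ℂ) - b ^ (k + 1))⁻¹ :=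
    multipliable_of_summable_sub_one ((summable_ratio_sub_one 0 b (fun k => b ^ k) geomb).congr
      (fun k => by rw [zero_mul, sub_zero, one_div, mul_comm b, ← pow_succ]))
  have hq : qPoch b b * ∏' j : ℕ, ((1 : ℂ) - b ^ (j + 1))⁻¹ = 1 := by
    unfold qPoch
    rw [← Multipliable.tprod_mul mPoch mInv]
    refine Eq.trans (tprod_congr (fun k => ?_)) tprod_one
    rw [← pow_succ]
    exact mul_inv_cancel₀ (one_sub_ne_zero_of_abs_lt (by
      rw [norm_pow]; exact pow_lt_one₀ (norm_nonneg b) hb (Nat.succ_ne_zero k)))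
  rw [ellGamma_eq_tprod, tprod_congr hXY, Multipliable.tprod_mul mX mY, hXval, hYval, mul_left_comm, hq,
    mul_one]

lemma list_flatMap_prod (l : List ℂ) (g : ℂ → ℂ) (c : ℂ) :
    ((l.flatMap fun x => [x, c * x]).map g).prod =
      (l.map (fun x => g x * g (c * x))).prod := by
  induction l with
  | nil => rfl
  | cons a l ih =>
    simp only [List.flatMap_cons, List.map_append, List.prod_append, List.map_cons,
      List.prod_cons, List.map_nil, List.prod_nil, mul_one, ih]

/-- Pointwise integrand identity underlying the base-`q²` versus base-`q` quadratic
transformation of elliptic Selberg densities. -/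
theorem selbergDensity_quadratic_base_q_pointwise (n m : ℕ) (hn : 1 ≤ n) (hm1 : 1 ≤ m)
    (hm : Odd m) (p q Q : ℂ) (hp0 : p ≠ 0) (hp : ‖p‖ < 1)
    (hq0 : q ≠ 0) (hq : ‖q‖ < 1) (hQ : Q ^ 2 = q)
    (u : Fin (m + 3) → ℂ) (hu0 : ∀ r, u r ≠ 0)
    (z : Fin n → ℂ) (hz : ∀ i, z i ≠ 0)
    (hsq : ∀ (a b : ℕ) (i : Fin n),
      p ^ a * q ^ b * (z i) ^ 2 ≠ 1 ∧ p ^ a * q ^ b / (z i) ^ 2 ≠ 1)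
    (hcross : ∀ (a b : ℕ) (i j : Fin n), i < j →
      p ^ a * q ^ b * (z i * z j) ≠ 1 ∧ p ^ a * q ^ b / (z i * z j) ≠ 1 ∧
      p ^ a * q ^ b * (z i / z j) ≠ 1 ∧ p ^ a * q ^ b * (z j / z i) ≠ 1)
    (hu : ∀ (a b : ℕ) (r : Fin (m + 3)) (i : Fin n),
      p ^ a * q ^ b * (u r * z i) ≠ 1 ∧ p ^ a * q ^ b * (u r / z i) ≠ 1)
    (hQz : ∀ (a b : ℕ) (i : Fin n),
      p ^ a * q ^ b * (Q * z i) ≠ 1 ∧ p ^ a * q ^ b * (Q / z i) ≠ 1 ∧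
      p ^ a * q ^ b * (Q * z i) ≠ -1 ∧ p ^ a * q ^ b * (Q / z i) ≠ -1) :
    selbergDensity n ((List.ofFn u).flatMap fun x => [x, q * x]) (q ^ 2) p (q ^ 2) z =
    selbergDensity n (List.ofFn u ++ [Q, -Q]) q p q z := by
  have hq2 : ‖q ^ 2‖ < 1 := by
    rw [norm_pow]; exact pow_lt_one₀ (norm_nonneg q) hq (by norm_num)
  have hp2 : ‖p ^ 2‖ < 1 := by
    rw [norm_pow]; exact pow_lt_one₀ (norm_nonneg p) hp (by norm_num)
  have hq20 : q ^ 2 ≠ 0 := pow_ne_zero 2 hq0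
  have hp20 : p ^ 2 ≠ 0 := pow_ne_zero 2 hp0
  -- base-splitting in q
  have S1 : ∀ x : ℂ, x ≠ 0 → ellGamma p q x = ellGamma p (q ^ 2) x * ellGamma p (q ^ 2) (q * x) :=
    fun x hx => ellGamma_split x hp hq hq0 hx
  -- base-splitting in p at base q²
  have S2 : ∀ x : ℂ, x ≠ 0 →
      ellGamma p (q ^ 2) x = ellGamma (p ^ 2) (q ^ 2) x * ellGamma (p ^ 2) (q ^ 2) (p * x) := by
    intro x hx
    calc ellGamma p (q ^ 2) x = ellGamma (q ^ 2) p x := ellGamma_symm _ _ _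
      _ = ellGamma (q ^ 2) (p ^ 2) x * ellGamma (q ^ 2) (p ^ 2) (p * x) :=
        ellGamma_split x hq2 hp hp0 hx
      _ = ellGamma (p ^ 2) (q ^ 2) x * ellGamma (p ^ 2) (q ^ 2) (p * x) := by
        rw [ellGamma_symm (q ^ 2) (p ^ 2) x, ellGamma_symm (q ^ 2) (p ^ 2) (p * x)]
  -- nonvanishing helper
  have key2 : ∀ x : ℂ, x ≠ 0 → (∀ a b : ℕ, p ^ a * q ^ b * x ≠ 1) →
      (∀ a b : ℕ, p ^ a * q ^ b / x ≠ 1) →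
      ellGamma p (q ^ 2) x ≠ 0 ∧ ellGamma p (q ^ 2) (q * x) ≠ 0 := by
    intro x hx h1 h2
    constructor
    · refine ellGamma_ne_zero x hp hq2 (fun i j => sub_ne_zero.mpr (Ne.symm ?_))
        (fun i j => sub_ne_zero.mpr (Ne.symm ?_))
      · have := h2 (i + 1) (2 * (j + 1)); rwa [pow_mul] at this
      · have := h1 i (2 * j); rwa [pow_mul] at this
    · refine ellGamma_ne_zero (q * x) hp hq2 (fun i j => sub_ne_zero.mpr (Ne.symm ?_))
        (fun i j => sub_ne_zero.mpr (Ne.symm ?_))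
      · have := h2 (i + 1) (2 * j + 1)
        rwa [show p ^ (i + 1) * q ^ (2 * j + 1) / x = p ^ (i + 1) * (q ^ 2) ^ (j + 1) / (q * x)
          from by rw [← pow_mul]; field_simp; ring] at this
      · have := h1 i (2 * j + 1)
        rwa [show p ^ i * q ^ (2 * j + 1) * x = p ^ i * (q ^ 2) ^ j * (q * x)
          from by rw [← pow_mul]; ring] at this
  -- prefactor equality
  have hA : (qPoch p p * qPoch (q ^ 2) (q ^ 2) * ellGamma p (q ^ 2) (q ^ 2) / 2) ^ n /
      (n.factorial : ℂ) = (qPoch p p * qPoch q q * ellGamma p q q / 2) ^ n / (n.factorial : ℂ) := by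
    rw [mul_assoc, mul_assoc, qPoch_mul_ellGamma hp hq2 hq20, qPoch_mul_ellGamma hp hq hq0]
  -- cross-term equality
  have hB : ∀ i j : Fin n, i < j →
      (ellGamma p (q ^ 2) (q ^ 2 * z i * z j) * ellGamma p (q ^ 2) (q ^ 2 * z i / z j) *
        ellGamma p (q ^ 2) (q ^ 2 * z j / z i) * ellGamma p (q ^ 2) (q ^ 2 / (z i * z j))) /
      (ellGamma p (q ^ 2) (z i * z j) * ellGamma p (q ^ 2) (z i / z j) *
        ellGamma p (q ^ 2) (z j / z i) * ellGamma p (q ^ 2) (1 / (z i * z j))) =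
      (ellGamma p q (q * z i * z j) * ellGamma p q (q * z i / z j) *
        ellGamma p q (q * z j / z i) * ellGamma p q (q / (z i * z j))) /
      (ellGamma p q (z i * z j) * ellGamma p q (z i / z j) *
        ellGamma p q (z j / z i) * ellGamma p q (1 / (z i * z j))) := by
    intro i j hij
    have hx1 : z i * z j ≠ 0 := mul_ne_zero (hz i) (hz j)
    have hx2 : z i / z j ≠ 0 := div_ne_zero (hz i) (hz j)
    have hx3 : z j / z i ≠ 0 := div_ne_zero (hz j) (hz i)
    have hx4 : 1 / (z i * z j) ≠ 0 := one_div_ne_zero hx1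
    have k1 := key2 (z i * z j) hx1 (fun a b => (hcross a b i j hij).1)
      (fun a b => (hcross a b i j hij).2.1)
    have k2 := key2 (z i / z j) hx2 (fun a b => (hcross a b i j hij).2.2.1)
      (fun a b => by
        have h := (hcross a b i j hij).2.2.2
        rwa [show p ^ a * q ^ b * (z j / z i) = p ^ a * q ^ b / (z i / z j) from by
          rw [div_div_eq_mul_div, mul_div_assoc]] at h)
    have k3 := key2 (z j / z i) hx3 (fun a b => (hcross a b i j hij).2.2.2)
      (fun a b => by
        have h := (hcross a b i j hij).2.2.1
        rwa [show p ^ a * q ^ b * (z i / z j) = p ^ a * q ^ b / (z j / z i) from by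
          rw [div_div_eq_mul_div, mul_div_assoc]] at h)
    have k4 := key2 (1 / (z i * z j)) hx4
      (fun a b => by
        have h := (hcross a b i j hij).2.1
        rwa [← mul_one_div] at h)
      (fun a b => by
        have h := (hcross a b i j hij).1
        rwa [show p ^ a * q ^ b * (z i * z j) = p ^ a * q ^ b / (1 / (z i * z j)) from by
           rw [one_div, div_inv_eq_mul]] at h)
    -- split identities for the numerator terms
    have e1 : ellGamma p q (q * z i * z j) =
        ellGamma p (q ^ 2) (q * z i * z j) * ellGamma p (q ^ 2) (q ^ 2 * z i * z j) := by
      have h := S1 (q * z i * z j) (mul_ne_zero (mul_ne_zero hq0 (hz i)) (hz j))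
      rwa [show q * (q * z i * z j) = q ^ 2 * z i * z j from by ring] at h
    have e2 : ellGamma p q (q * z i / z j) =
        ellGamma p (q ^ 2) (q * z i / z j) * ellGamma p (q ^ 2) (q ^ 2 * z i / z j) := by
      have h := S1 (q * z i / z j) (div_ne_zero (mul_ne_zero hq0 (hz i)) (hz j))
      rwa [show q * (q * z i / z j) = q ^ 2 * z i / z j from by ring] at h
    have e3 : ellGamma p q (q * z j / z i) =
        ellGamma p (q ^ 2) (q * z j / z i) * ellGamma p (q ^ 2) (q ^ 2 * z j / z i) := by
      have h := S1 (q * z j / z i) (div_ne_zero (mul_ne_zero hq0 (hz j)) (hz i))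
      rwa [show q * (q * z j / z i) = q ^ 2 * z j / z i from by ring] at h
    have e4 : ellGamma p q (q / (z i * z j)) =
        ellGamma p (q ^ 2) (q / (z i * z j)) * ellGamma p (q ^ 2) (q ^ 2 / (z i * z j)) := by
      have h := S1 (q / (z i * z j)) (div_ne_zero hq0 hx1)
      rwa [show q * (q / (z i * z j)) = q ^ 2 / (z i * z j) from by ring] at h
    have d1 : ellGamma p q (z i * z j) =
        ellGamma p (q ^ 2) (z i * z j) * ellGamma p (q ^ 2) (q * z i * z j) := by
      have h := S1 (z i * z j) hx1
      rwa [show q * (z i * z j) = q * z i * z j from by ring] at h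
    have d2 : ellGamma p q (z i / z j) =
        ellGamma p (q ^ 2) (z i / z j) * ellGamma p (q ^ 2) (q * z i / z j) := by
      have h := S1 (z i / z j) hx2
      rwa [show q * (z i / z j) = q * z i / z j from by ring] at h
    have d3 : ellGamma p q (z j / z i) =
        ellGamma p (q ^ 2) (z j / z i) * ellGamma p (q ^ 2) (q * z j / z i) := by
      have h := S1 (z j / z i) hx3
      rwa [show q * (z j / z i) = q * z j / z i from by ring] at h
    have d4 : ellGamma p q (1 / (z i * z j)) =
        ellGamma p (q ^ 2) (1 / (z i * z j)) * ellGamma p (q ^ 2) (q / (z i * z j)) := by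
      have h := S1 (1 / (z i * z j)) hx4
      rwa [show q * (1 / (z i * z j)) = q / (z i * z j) from by ring] at h
    -- the q-arguments in canonical form
    have k12 : ellGamma p (q ^ 2) (q * z i * z j) ≠ 0 := by
      have h := k1.2; rwa [← mul_assoc] at h
    have k22 : ellGamma p (q ^ 2) (q * z i / z j) ≠ 0 := by
      have h := k2.2; rwa [← mul_div_assoc] at h
    have k32 : ellGamma p (q ^ 2) (q * z j / z i) ≠ 0 := by
      have h := k3.2; rwa [← mul_div_assoc] at h
    have k42 : ellGamma p (q ^ 2) (q / (z i * z j)) ≠ 0 := by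
      have h := k4.2; rwa [mul_one_div] at h
    rw [e1, e2, e3, e4, d1, d2, d3, d4]
    rw [div_eq_div_iff
      (mul_ne_zero (mul_ne_zero (mul_ne_zero k1.1 k2.1) k3.1) k4.1)
      (mul_ne_zero (mul_ne_zero (mul_ne_zero (mul_ne_zero k1.1 k12) (mul_ne_zero k2.1 k22))
        (mul_ne_zero k3.1 k32)) (mul_ne_zero k4.1 k42))]
    ring
  -- per-variable equality
  have hC : ∀ i : Fin n,
      (((List.ofFn u).flatMap fun x => [x, q * x]).map
        (fun ur => ellGamma p (q ^ 2) (ur * z i) * ellGamma p (q ^ 2) (ur / z i))).prod /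
        (ellGamma p (q ^ 2) (z i ^ 2) * ellGamma p (q ^ 2) ((z i ^ 2)⁻¹)) =
      ((List.ofFn u ++ [Q, -Q]).map
        (fun ur => ellGamma p q (ur * z i) * ellGamma p q (ur / z i))).prod /
        (ellGamma p q (z i ^ 2) * ellGamma p q ((z i ^ 2)⁻¹)) := by
    intro i
    have hzi2 : z i ^ 2 ≠ 0 := pow_ne_zero 2 (hz i)
    have hzi2' : (z i ^ 2)⁻¹ ≠ 0 := inv_ne_zero hzi2
    have kz := key2 (z i ^ 2) hzi2 (fun a b => (hsq a b i).1) (fun a b => (hsq a b i).2)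
    have kzi := key2 ((z i ^ 2)⁻¹) hzi2'
      (fun a b => by have h := (hsq a b i).2; rwa [div_eq_mul_inv] at h)
      (fun a b => by have h := (hsq a b i).1; rwa [← div_inv_eq_mul] at h)
    -- doubling of the Q-terms
    have dbl1 := ellGamma_double (Q * z i) hp hq
    rw [show -(Q * z i) = -Q * z i from by ring,
      show (Q * z i) ^ 2 = q * z i ^ 2 from by rw [mul_pow, hQ]] at dbl1
    have dbl2 := ellGamma_double (Q / z i) hp hq
    rw [show -(Q / z i) = -Q / z i from by ring,
      show (Q / z i) ^ 2 = q * (z i ^ 2)⁻¹ from by rw [div_pow, hQ, div_eq_mul_inv]] at dbl2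
    -- reflection
    have refl5 : ellGamma (p ^ 2) (q ^ 2) (p * (q * z i ^ 2)) *
        ellGamma (p ^ 2) (q ^ 2) (p * (q * (z i ^ 2)⁻¹)) = 1 := by
      have h := ellGamma_reflect (p * (q * z i ^ 2)) hp2 hq2 hp20 hq20
        (fun a b => sub_ne_zero.mpr (Ne.symm (by
          have h2 := (hsq (2 * a + 1) (2 * b + 1) i).2
          rwa [show p ^ (2 * a + 1) * q ^ (2 * b + 1) / z i ^ 2 =
            (p ^ 2) ^ (a + 1) * (q ^ 2) ^ (b + 1) / (p * (q * z i ^ 2)) from by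
            rw [← pow_mul, ← pow_mul]; field_simp; ring] at h2)))
        (fun a b => sub_ne_zero.mpr (Ne.symm (by
          have h2 := (hsq (2 * a + 1) (2 * b + 1) i).1
          rwa [show p ^ (2 * a + 1) * q ^ (2 * b + 1) * z i ^ 2 =
            (p ^ 2) ^ a * (q ^ 2) ^ b * (p * (q * z i ^ 2)) from by
            rw [← pow_mul, ← pow_mul]; ring] at h2)))
      rwa [show p ^ 2 * q ^ 2 / (p * (q * z i ^ 2)) = p * (q * (z i ^ 2)⁻¹) from by
        field_simp] at h
    have hG2 : ellGamma p (q ^ 2) (q * z i ^ 2) * ellGamma p (q ^ 2) (q * (z i ^ 2)⁻¹) =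
        ellGamma (p ^ 2) (q ^ 2) (q * z i ^ 2) * ellGamma (p ^ 2) (q ^ 2) (q * (z i ^ 2)⁻¹) := by
      rw [S2 (q * z i ^ 2) (mul_ne_zero hq0 hzi2), S2 (q * (z i ^ 2)⁻¹) (mul_ne_zero hq0 hzi2'),
        mul_mul_mul_comm, refl5, mul_one]
    have hsz : ellGamma p q (z i ^ 2) =
        ellGamma p (q ^ 2) (z i ^ 2) * ellGamma p (q ^ 2) (q * z i ^ 2) := S1 _ hzi2
    have hszi : ellGamma p q ((z i ^ 2)⁻¹) =
        ellGamma p (q ^ 2) ((z i ^ 2)⁻¹) * ellGamma p (q ^ 2) (q * (z i ^ 2)⁻¹) := S1 _ hzi2'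
    have hU : (∏ r : Fin (m + 3), (ellGamma p q (u r * z i) * ellGamma p q (u r / z i))) =
        ∏ r : Fin (m + 3),
          ((ellGamma p (q ^ 2) (u r * z i) * ellGamma p (q ^ 2) (u r / z i)) *
            (ellGamma p (q ^ 2) (q * u r * z i) * ellGamma p (q ^ 2) (q * u r / z i))) := by
      refine Finset.prod_congr rfl fun r _ => ?_
      have h1 := S1 (u r * z i) (mul_ne_zero (hu0 r) (hz i))
      rw [← mul_assoc] at h1
      have h2 := S1 (u r / z i) (div_ne_zero (hu0 r) (hz i))
      rw [← mul_div_assoc] at h2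
      rw [h1, h2]; ring
    rw [list_flatMap_prod, List.map_ofFn, List.prod_ofFn, List.map_append, List.prod_append,
      List.map_ofFn, List.prod_ofFn]
    simp only [Function.comp, List.map_cons, List.map_nil, List.prod_cons, List.prod_nil, mul_one]
    rw [← hU, hsz, hszi]
    rw [div_eq_div_iff (mul_ne_zero kz.1 kzi.1)
      (mul_ne_zero (mul_ne_zero kz.1 kz.2) (mul_ne_zero kzi.1 kzi.2))]
    set P := ∏ x : Fin (m + 3), ellGamma p q (u x * z i) * ellGamma p q (u x / z i) with hP
    set A := ellGamma p (q ^ 2) (z i ^ 2)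
    set B := ellGamma p (q ^ 2) ((z i ^ 2)⁻¹)
    set G4a := ellGamma (p ^ 2) (q ^ 2) (q * z i ^ 2)
    set C2 := ellGamma p q (Q / z i)
    set C4 := ellGamma p q (-Q / z i)
    linear_combination (P * A * B) * hG2 - (P * A * B * C2 * C4) * dbl1 -
      (P * A * B * G4a) * dbl2
  unfold selbergDensity
  refine congrArg₂ (· * ·) (congrArg₂ (· * ·) hA ?_) ?_
  · refine Finset.prod_congr rfl fun i _ => Finset.prod_congr rfl fun j _ => ?_
    by_cases hij : i < j
    · simp only [if_pos hij]
      exact hB i j hij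
    · simp only [if_neg hij]
  · exact Finset.prod_congr rfl fun i _ => hC i
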